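/- arXiv:1603.00988 — 2 statements merged into one kernel-verified Lean document; each statement's English description precedes it below -/
import Mathlib

section
/- Let σ : ℝ → ℝ be infinitely differentiable and not a polynomial on any subinterval of ℝ, and let k ≥ 0 be an integer. Then for every polynomial P of degree at most k in one variable and every ε > 0, there exist a_i, w_i, b_i ∈ ℝ (i = 1, …, k+1) such that sup_{x∈[-1,1]} |P(x) − Σ_{i=1}^{k+1} a_i σ(w_i x + b_i)| ≤ ε. In other words, every univariate polynomial of degree at most k lies in the closure (in the uniform norm on [-1,1]) of the class of shallow networks with k+1 units. -/
open Polynomial Finset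

noncomputable def antideriv (p : ℝ[X]) : ℝ[X] :=
  ∑ n ∈ range (p.natDegree + 1), C (p.coeff n / (n + 1)) * X ^ (n + 1)

lemma antideriv_derivative (p : ℝ[X]) : (antideriv p).derivative = p := by
  rw [antideriv, derivative_sum]
  have : ∀ n ∈ range (p.natDegree + 1),
      (C (p.coeff n / (n + 1)) * X ^ (n + 1) : ℝ[X]).derivative = C (p.coeff n) * X ^ n := by
    intro n _
    rw [derivative_C_mul, derivative_X_pow, ← mul_assoc]
    congr 1
    push_cast
    rw [← C_mul, div_mul_cancel₀]
    exact Nat.cast_add_one_ne_zero n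
  rw [Finset.sum_congr rfl this]
  conv_rhs => rw [p.as_sum_range' (p.natDegree + 1) (Nat.lt_succ_of_le le_rfl)]
  exact Finset.sum_congr rfl fun n _ => by rw [C_mul_X_pow_eq_monomial]

lemma poly_of_iteratedDeriv_zero (a b : ℝ) (hab : a < b) :
    ∀ (j : ℕ) (f : ℝ → ℝ), ContDiff ℝ ((⊤ : ℕ∞) : WithTop ℕ∞) f → (∀ x ∈ Set.Ioo a b, iteratedDeriv j f x = 0) →
    ∃ p : ℝ[X], ∀ x ∈ Set.Ioo a b, f x = p.eval x := by
  intro j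
  induction j with
  | zero => exact fun f _ h => ⟨0, fun x hx => by simpa using h x hx⟩
  | succ j ih =>
    intro f hf h
    rw [iteratedDeriv_succ'] at h
    obtain ⟨p, hp⟩ := ih (deriv f) (contDiff_infty_iff_deriv.mp hf).2 h
    set Q := antideriv p with hQ
    set g := fun x => f x - Q.eval x with hg
    have key : ∀ x ∈ Set.Ioo a b, ∀ y ∈ Set.Ioo a b, g x = g y := by
      intro x hx y hy
      have hd : ∀ z ∈ Set.Ioo a b, HasDerivWithinAt g 0 (Set.Ioo a b) z := by
        intro z hz
        have h1 : HasDerivAt f (deriv f z) z :=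
          (hf.differentiable (by simp) z).hasDerivAt
        have h2 : HasDerivAt (fun x => Q.eval x) (p.eval z) z := by
          have := Q.hasDerivAt z
          rwa [antideriv_derivative] at this
        have := (h1.sub h2).hasDerivWithinAt (s := Set.Ioo a b)
        rwa [hp z hz, sub_self] at this
      have := Convex.norm_image_sub_le_of_norm_hasDerivWithin_le (C := 0) hd
        (fun z _ => by simp) (convex_Ioo a b) hy hx
      simp only [zero_mul] at this
      have : ‖g x - g y‖ ≤ 0 := this
      have := norm_eq_zero.mp (le_antisymm this (norm_nonneg _)) 
      linarith [sub_eq_zero.mp this]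
    have hmid : (a + b) / 2 ∈ Set.Ioo a b := by constructor <;> linarith
    refine ⟨Q + Polynomial.C (g ((a + b) / 2)), fun x hx => ?_⟩
    have := key x hx _ hmid
    simp only [Polynomial.eval_add, Polynomial.eval_C]
    simp only [hg] at this
    linarith

lemma exists_good_point (σ : ℝ → ℝ) (hσ : ContDiff ℝ ((⊤ : ℕ∞) : WithTop ℕ∞) σ)
    (hσpoly : ∀ a b : ℝ, a < b →
      ¬∃ p : Polynomial ℝ, ∀ x ∈ Set.Ioo a b, σ x = p.eval x) :
    ∃ b : ℝ, ∀ j : ℕ, iteratedDeriv j σ b ≠ 0 := by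
  have hU : ∀ j : ℕ, IsOpen {x : ℝ | iteratedDeriv j σ x ≠ 0} := by
    intro j
    exact isOpen_ne.preimage (hσ.continuous_iteratedDeriv j (by exact_mod_cast le_top))
  have hD : ∀ j : ℕ, Dense {x : ℝ | iteratedDeriv j σ x ≠ 0} := by
    intro j
    have : {x : ℝ | iteratedDeriv j σ x ≠ 0} = {x : ℝ | iteratedDeriv j σ x = 0}ᶜ := rfl
    rw [this, ← interior_eq_empty_iff_dense_compl]
    by_contra hne
    obtain ⟨x, hx⟩ := Set.nonempty_iff_ne_empty.mpr hne
    obtain ⟨ε, hε, hball⟩ := Metric.isOpen_iff.mp isOpen_interior x hx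
    have hIoo : Set.Ioo (x - ε) (x + ε) ⊆ {x : ℝ | iteratedDeriv j σ x = 0} := by
      intro y hy
      apply interior_subset
      apply hball
      rw [Metric.mem_ball, Real.dist_eq, abs_lt]
      obtain ⟨h1, h2⟩ := hy
      constructor <;> linarith
    obtain ⟨p, hp⟩ := poly_of_iteratedDeriv_zero (x - ε) (x + ε) (by linarith) j σ hσ
      (fun y hy => hIoo hy)
    exact hσpoly (x - ε) (x + ε) (by linarith) ⟨p, hp⟩
  have := dense_iInter_of_isOpen hU hD
  obtain ⟨b, hb⟩ := this.nonempty
  exact ⟨b, fun j => Set.mem_iInter.mp hb j⟩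

lemma taylor_bd (c K M : ℝ) (hK : 0 ≤ K) :
    ∀ (n : ℕ) (f : ℝ → ℝ), ContDiff ℝ ((⊤ : ℕ∞) : WithTop ℕ∞) f →
    (∀ t ∈ Set.Icc (c - K) (c + K), |iteratedDeriv (n+1) f t| ≤ M) →
    ∀ u : ℝ, |u| ≤ K →
    |f (c + u) - ∑ j ∈ Finset.range (n+1), iteratedDeriv j f c * u^j / j.factorial|
      ≤ M * |u|^(n+1) := by
  intro n
  induction n with
  | zero =>
    intro f hf hM u hu
    have hcs : c ∈ Set.Icc (c - K) (c + K) := by constructor <;> linarith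
    have hus : c + u ∈ Set.Icc (c - K) (c + K) := by
      rw [abs_le] at hu; constructor <;> linarith
    have hd : ∀ x ∈ Set.Icc (c - K) (c + K),
        HasDerivWithinAt f (deriv f x) (Set.Icc (c - K) (c + K)) x := fun x _ =>
      ((hf.differentiable (by simp)) x).hasDerivAt.hasDerivWithinAt
    have bound : ∀ x ∈ Set.Icc (c - K) (c + K), ‖deriv f x‖ ≤ M := by
      intro x hx
      have := hM x hx
      rwa [iteratedDeriv_one] at this
    have := Convex.norm_image_sub_le_of_norm_hasDerivWithin_le hd bound
      (convex_Icc _ _) hcs hus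
    simpa using this
  | succ n ih =>
    intro f hf hM u hu
    have hM0 : 0 ≤ M := by
      have hcs : c ∈ Set.Icc (c - K) (c + K) := by constructor <;> linarith
      exact le_trans (abs_nonneg _) (hM c hcs)
    set S : ℝ → ℝ := fun t => ∑ j ∈ Finset.range (n+2),
      iteratedDeriv j f c * t^j / j.factorial with hS
    set g : ℝ → ℝ := fun t => f (c + t) - S t with hgdef
    set g' : ℝ → ℝ := fun t => deriv f (c + t) - ∑ j ∈ Finset.range (n+1),
      iteratedDeriv (j+1) f c * t^j / j.factorial with hg'def
    have hg' : ∀ t : ℝ, HasDerivAt g (g' t) t := by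
      intro t
      have h1 : HasDerivAt (fun u => f (c + u)) (deriv f (c + t)) t := by
        have hf' : HasDerivAt f (deriv f (c + t)) (c + t) :=
          ((hf.differentiable (by simp)) (c + t)).hasDerivAt
        have hid : HasDerivAt (fun u : ℝ => c + u) 1 t := (hasDerivAt_id t).const_add c
        exact (by simpa using hf'.comp t hid : HasDerivAt (f ∘ HAdd.hAdd c) (deriv f (c + t)) t)
      have h2 : HasDerivAt S (∑ j ∈ Finset.range (n+2),
          iteratedDeriv j f c * (j * t^(j-1)) / j.factorial) t := by
        apply HasDerivAt.fun_sum
        intro j _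
        exact ((hasDerivAt_pow j t).const_mul (iteratedDeriv j f c)).div_const _
      have h3 : (∑ j ∈ Finset.range (n+2),
          iteratedDeriv j f c * (j * t^(j-1)) / j.factorial) =
          ∑ j ∈ Finset.range (n+1), iteratedDeriv (j+1) f c * t^j / j.factorial := by
        rw [Finset.sum_range_succ']
        simp only [Nat.cast_zero, zero_mul, mul_zero, zero_div, add_zero]
        refine Finset.sum_congr rfl fun j _ => ?_
        rw [Nat.factorial_succ]
        push_cast
        have hj : (0:ℝ) < j.factorial := by positivity
        field_simp
      rw [h3] at h2
      exact h1.sub h2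
    have hg0 : g 0 = 0 := by
      simp only [hgdef, hS, add_zero]
      rw [Finset.sum_eq_single 0]
      · simp
      · intro j _ hj
        simp [zero_pow hj]
      · simp
    have hbound : ∀ t ∈ Set.uIcc (0:ℝ) u, ‖g' t‖ ≤ M * |u|^(n+1) := by
      intro t ht
      have htu : |t| ≤ |u| := by
        rcases Set.mem_uIcc.mp ht with h | h <;> rw [abs_le] <;>
          constructor <;> nlinarith [le_abs_self u, neg_abs_le u]
      have htK : |t| ≤ K := le_trans htu hu
      have hdf : ContDiff ℝ ((⊤ : ℕ∞) : WithTop ℕ∞) (deriv f) :=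
        (contDiff_infty_iff_deriv.mp hf).2
      have hMdf : ∀ s ∈ Set.Icc (c - K) (c + K), |iteratedDeriv (n+1) (deriv f) s| ≤ M := by
        intro s hs
        rw [← iteratedDeriv_succ']
        exact hM s hs
      have := ih (deriv f) hdf hMdf t htK
      have heq : ∑ j ∈ Finset.range (n+1), iteratedDeriv j (deriv f) c * t^j / j.factorial
          = ∑ j ∈ Finset.range (n+1), iteratedDeriv (j+1) f c * t^j / j.factorial := by
        refine Finset.sum_congr rfl fun j _ => ?_
        rw [← iteratedDeriv_succ']
      rw [heq] at this
      calc ‖g' t‖ ≤ M * |t|^(n+1) := this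
        _ ≤ M * |u|^(n+1) := by
            apply mul_le_mul_of_nonneg_left _ hM0
            exact pow_le_pow_left₀ (abs_nonneg t) htu _
    have := Convex.norm_image_sub_le_of_norm_hasDerivWithin_le
      (fun t ht => (hg' t).hasDerivWithinAt) hbound (convex_uIcc 0 u)
      Set.left_mem_uIcc Set.right_mem_uIcc
    rw [hg0, sub_zero] at this
    calc |f (c + u) - ∑ j ∈ Finset.range (n+1+1),
        iteratedDeriv j f c * u^j / j.factorial| = ‖g u‖ := rfl
      _ ≤ M * |u|^(n+1) * ‖u - 0‖ := this
      _ = M * |u|^(n+1+1) := by rw [sub_zero, Real.norm_eq_abs, pow_succ]; ring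

lemma lag_sum (k : ℕ) (j j' : ℕ) (hj : j ≤ k) :
    ∑ i : Fin (k+1), ((i : ℕ) : ℝ)^j *
      (Lagrange.basis Finset.univ (fun i : Fin (k+1) => ((i : ℕ) : ℝ)) i).coeff j'
      = if j' = j then 1 else 0 := by
  set v : Fin (k+1) → ℝ := fun i => ((i : ℕ) : ℝ) with hv
  have hinj : Set.InjOn v (Finset.univ : Finset (Fin (k+1))) := by
    intro i _ i' _ h
    simp only [hv] at h
    exact Fin.ext (by exact_mod_cast h)
  have hdeg : ((X : ℝ[X])^j).degree < (Finset.univ : Finset (Fin (k+1))).card := by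
    rw [Polynomial.degree_X_pow, Finset.card_univ, Fintype.card_fin]
    exact_mod_cast Nat.lt_succ_of_le hj
  have := Lagrange.eq_interpolate hinj hdeg
  have hco := congrArg (fun p => Polynomial.coeff p j') this
  simp only [Lagrange.interpolate, LinearMap.coe_mk, AddHom.coe_mk,
    Polynomial.finset_sum_coeff, Polynomial.coeff_C_mul, Polynomial.eval_pow,
    Polynomial.eval_X] at hco
  rw [Polynomial.coeff_X_pow] at hco
  exact hco.symm

/-- Every univariate polynomial of degree at most `k` lies in the uniform
closure, on `[-1,1]`, of the class of shallow networks with `k+1` units whose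
activation `σ` is infinitely differentiable and not a polynomial on any
subinterval of `ℝ`. -/
theorem stmt9 (σ : ℝ → ℝ) (hσ : ContDiff ℝ (⊤ : ℕ∞) σ)
    (hσpoly : ∀ a b : ℝ, a < b →
      ¬∃ p : Polynomial ℝ, ∀ x ∈ Set.Ioo a b, σ x = p.eval x)
    (k : ℕ) (P : Polynomial ℝ) (hP : P.natDegree ≤ k)
    (ε : ℝ) (hε : 0 < ε) :
    ∃ a w b : Fin (k + 1) → ℝ,
      ∀ x ∈ Set.Icc (-1 : ℝ) 1,
        |P.eval x - ∑ i, a i * σ (w i * x + b i)| ≤ ε := by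
  classical
  have hσs : ContDiff ℝ ((⊤ : ℕ∞) : WithTop ℕ∞) σ := hσ.of_le (by simp)
  obtain ⟨b₀, hb₀⟩ := exists_good_point σ hσs hσpoly
  set c : ℕ → ℝ := fun j => iteratedDeriv j σ b₀ with hcdef
  set v : Fin (k+1) → ℝ := fun i => ((i : ℕ) : ℝ) with hvdef
  set ℓc : Fin (k+1) → ℕ → ℝ :=
    fun i j => (Lagrange.basis Finset.univ v i).coeff j with hℓcdef
  set d : ℕ → ℝ := fun j => P.coeff j * j.factorial / c j with hddef
  set K : ℝ := (k : ℝ) with hKdef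
  have hK : 0 ≤ K := Nat.cast_nonneg k
  -- bound on the (k+1)-st derivative
  obtain ⟨M, hM⟩ := (isCompact_Icc (a := b₀ - K) (b := b₀ + K)).exists_bound_of_continuousOn
    ((hσs.continuous_iteratedDeriv (k+1) (by exact_mod_cast le_top)).continuousOn)
  set M' : ℝ := max M 0 with hM'def
  have hM'0 : 0 ≤ M' := le_max_right _ _
  have hMbd : ∀ t ∈ Set.Icc (b₀ - K) (b₀ + K), |iteratedDeriv (k+1) σ t| ≤ M' :=
    fun t ht => le_trans (hM t ht) (le_max_left _ _)
  set A : Fin (k+1) → ℝ := fun i => ∑ j ∈ Finset.range (k+1), |d j| * |ℓc i j| with hAdef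
  have hA0 : ∀ i, 0 ≤ A i := fun i => Finset.sum_nonneg fun j _ => by positivity
  set E : ℝ := (∑ i, A i) * M' * K^(k+1) with hEdef
  have hE0 : 0 ≤ E := by
    apply mul_nonneg (mul_nonneg (Finset.sum_nonneg fun i _ => hA0 i) hM'0)
    positivity
  set h : ℝ := min 1 (ε / (E + 1)) with hhdef
  have hh0 : 0 < h := lt_min one_pos (by positivity)
  have hh1 : h ≤ 1 := min_le_left _ _
  have hhE : E * h ≤ ε := by
    have h1 : (0:ℝ) < E + 1 := by linarith
    calc E * h ≤ E * (ε / (E + 1)) :=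
          mul_le_mul_of_nonneg_left (min_le_right _ _) hE0
      _ ≤ ε := by
          rw [mul_comm, div_mul_eq_mul_div, div_le_iff₀ h1]
          nlinarith
  have hhinv : 1 ≤ h⁻¹ := (one_le_inv_iff₀).mpr ⟨hh0, hh1⟩
  -- the network parameters
  set a : Fin (k+1) → ℝ :=
    fun i => ∑ j ∈ Finset.range (k+1), d j * h⁻¹^j * ℓc i j with hadef
  set w : Fin (k+1) → ℝ := fun i => v i * h with hwdef
  have hv0 : ∀ i : Fin (k+1), 0 ≤ v i := fun i => by
    simp only [hvdef]; positivity
  have hvK : ∀ i : Fin (k+1), v i ≤ K := fun i => by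
    simp only [hvdef, hKdef]
    exact_mod_cast Nat.lt_succ_iff.mp i.isLt
  refine ⟨a, w, fun _ => b₀, fun x hx => ?_⟩
  have hxabs : |x| ≤ 1 := abs_le.mpr ⟨hx.1, hx.2⟩
  -- inner Vandermonde identity
  have hinner : ∀ j ∈ Finset.range (k+1), (∑ i, a i * (w i)^j) = d j := by
    intro j hj
    have hjk : j ≤ k := Nat.lt_succ_iff.mp (Finset.mem_range.mp hj)
    calc (∑ i, a i * (w i)^j)
        = ∑ i, ∑ j' ∈ Finset.range (k+1),
            (d j' * h⁻¹^j' * h^j) * ((v i)^j * ℓc i j') := by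
          refine Finset.sum_congr rfl fun i _ => ?_
          simp only [hadef, hwdef, mul_pow, Finset.sum_mul]
          exact Finset.sum_congr rfl fun j' _ => by ring
      _ = ∑ j' ∈ Finset.range (k+1),
            (d j' * h⁻¹^j' * h^j) * ∑ i, (v i)^j * ℓc i j' := by
          rw [Finset.sum_comm]
          exact Finset.sum_congr rfl fun j' _ => by rw [Finset.mul_sum]
      _ = ∑ j' ∈ Finset.range (k+1),
            (d j' * h⁻¹^j' * h^j) * (if j' = j then 1 else 0) := by
          refine Finset.sum_congr rfl fun j' _ => ?_
          rw [lag_sum k j j' hjk]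
      _ = d j * h⁻¹^j * h^j := by
          rw [Finset.sum_eq_single j]
          · simp
          · intro j' _ hj'; simp [hj']
          · intro hj'; exact absurd hj hj'
      _ = d j := by
          rw [mul_assoc, ← mul_pow, inv_mul_cancel₀ (ne_of_gt hh0), one_pow, mul_one]
  -- the Taylor polynomial part reproduces P
  have hmain : (∑ i, a i * (∑ j ∈ Finset.range (k+1), c j * (w i * x)^j / j.factorial))
      = P.eval x := by
    calc (∑ i, a i * (∑ j ∈ Finset.range (k+1), c j * (w i * x)^j / j.factorial))
        = ∑ i, ∑ j ∈ Finset.range (k+1),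
            (c j / j.factorial * x^j) * (a i * (w i)^j) := by
          refine Finset.sum_congr rfl fun i _ => ?_
          rw [Finset.mul_sum]
          exact Finset.sum_congr rfl fun j _ => by rw [mul_pow]; ring
      _ = ∑ j ∈ Finset.range (k+1),
            (c j / j.factorial * x^j) * (∑ i, a i * (w i)^j) := by
          rw [Finset.sum_comm]
          exact Finset.sum_congr rfl fun j _ => by rw [Finset.mul_sum]
      _ = ∑ j ∈ Finset.range (k+1), P.coeff j * x^j := by
          refine Finset.sum_congr rfl fun j hj => ?_
          rw [hinner j hj, hddef]
          have hcj : c j ≠ 0 := hb₀ j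
          have hfj : (j.factorial : ℝ) ≠ 0 := by positivity
          field_simp
      _ = P.eval x := by
          rw [Polynomial.eval_eq_sum_range' (Nat.lt_succ_of_le hP)]
  -- Taylor remainder bound
  set R : Fin (k+1) → ℝ := fun i =>
    σ (w i * x + b₀) - ∑ j ∈ Finset.range (k+1), c j * (w i * x)^j / j.factorial with hRdef
  have hwbd : ∀ i : Fin (k+1), |w i * x| ≤ K * h := by
    intro i
    have hw0 : (0:ℝ) ≤ v i * h := mul_nonneg (hv0 i) hh0.le
    calc |w i * x| = (v i * h) * |x| := by
          rw [abs_mul, hwdef, abs_of_nonneg hw0]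
      _ ≤ (K * h) * 1 :=
          mul_le_mul (mul_le_mul_of_nonneg_right (hvK i) hh0.le) hxabs
            (abs_nonneg x) (mul_nonneg hK hh0.le)
      _ = K * h := mul_one _
  have hwK : ∀ i : Fin (k+1), |w i * x| ≤ K := fun i =>
    le_trans (hwbd i) (by nlinarith)
  have hR : ∀ i : Fin (k+1), |R i| ≤ M' * (K * h)^(k+1) := by
    intro i
    have := taylor_bd b₀ K M' hK k σ hσs hMbd (w i * x) (hwK i)
    rw [add_comm b₀ (w i * x)] at this
    calc |R i| ≤ M' * |w i * x|^(k+1) := this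
      _ ≤ M' * (K * h)^(k+1) := by
          apply mul_le_mul_of_nonneg_left _ hM'0
          exact pow_le_pow_left₀ (abs_nonneg _) (hwbd i) _
  have habd : ∀ i, |a i| ≤ h⁻¹^k * A i := by
    intro i
    calc |a i| ≤ ∑ j ∈ Finset.range (k+1), |d j * h⁻¹^j * ℓc i j| :=
          Finset.abs_sum_le_sum_abs _ _
      _ ≤ ∑ j ∈ Finset.range (k+1), h⁻¹^k * (|d j| * |ℓc i j|) := by
          refine Finset.sum_le_sum fun j hj => ?_
          rw [abs_mul, abs_mul]
          have h1 : |h⁻¹^j| = h⁻¹^j := abs_of_pos (pow_pos (inv_pos.mpr hh0) j)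
          rw [h1]
          have h2 : h⁻¹^j ≤ h⁻¹^k :=
            pow_le_pow_right₀ hhinv (Nat.lt_succ_iff.mp (Finset.mem_range.mp hj))
          have h3 := mul_le_mul_of_nonneg_left h2
            (mul_nonneg (abs_nonneg (d j)) (abs_nonneg (ℓc i j)))
          nlinarith [h3]
      _ = h⁻¹^k * A i := by rw [hAdef, Finset.mul_sum]
  -- final estimate
  have hsplit : P.eval x - ∑ i, a i * σ (w i * x + b₀) = -(∑ i, a i * R i) := by
    rw [← hmain, ← Finset.sum_sub_distrib, ← Finset.sum_neg_distrib]
    refine Finset.sum_congr rfl fun i _ => ?_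
    simp only [hRdef]
    ring
  rw [hsplit, abs_neg]
  calc |∑ i, a i * R i| ≤ ∑ i, |a i * R i| := Finset.abs_sum_le_sum_abs _ _
    _ ≤ ∑ i : Fin (k+1), (h⁻¹^k * A i) * (M' * (K * h)^(k+1)) := by
        refine Finset.sum_le_sum fun i _ => ?_
        rw [abs_mul]
        exact mul_le_mul (habd i) (hR i) (abs_nonneg _)
          (mul_nonneg (pow_nonneg (inv_pos.mpr hh0).le k) (hA0 i))
    _ = E * h := by
        rw [← Finset.sum_mul, ← Finset.mul_sum, hEdef]
        rw [mul_pow, pow_succ h k]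
        field_simp
        have hhk : (1 / h) ^ k * h ^ k = 1 := by
          rw [← mul_pow, one_div, inv_mul_cancel₀ (ne_of_gt hh0), one_pow]
        linear_combination ((∑ i, A i) * M' * K ^ (k + 1)) * hhk
    _ ≤ ε := hhE
end

section
/- Let σ : ℝ → ℝ be infinitely differentiable and not a polynomial on any subinterval of ℝ, let A, B, C, D, E, F, G, H, I ∈ ℝ, and let Q(x,y) = (Ax²y² + Bx²y + Cxy² + Dx² + 2Exy + Fy² + 2Gx + 2Hy + I)^{2^{10}}. Then for every ε > 0 there exist a shallow network g₀ : ℝ² → ℝ with 9 units (g₀(x,y) = Σ_{i=1}^9 a_i σ(v_i·(x,y) + t_i)) and univariate shallow networks g₁, …, g₁₀ : ℝ → ℝ each with 3 units (g_j(t) = Σ_{i=1}^3 c_{j,i} σ(w_{j,i} t + b_{j,i})) such that sup_{(x,y)∈[-1,1]²} |Q(x,y) − (g₁₀ ∘ g₉ ∘ ⋯ ∘ g₁ ∘ g₀)(x,y)| ≤ ε. Thus a hierarchical network with 11 layers and 39 units total approximates Q arbitrarily well, even though Q is nominally a polynomial of coordinatewise degree 2^{11}. -/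
open Set Finset

noncomputable section AuxStmt11

lemma itdw {f : ℝ → ℝ} (hf : ContDiff ℝ ((⊤:ℕ∞) : WithTop ℕ∞) f) {s : Set ℝ}
    (hs : UniqueDiffOn ℝ s) {x : ℝ} (hx : x ∈ s) (n : ℕ) :
    iteratedDerivWithin n f s x = iteratedDeriv n f x := by
  have h := (contDiff_iff_ftaylorSeries (n := (⊤:ℕ∞)).mp hf).hasFTaylorSeriesUpToOn s
  have h2 := h.eq_iteratedFDerivWithin_of_uniqueDiffOn (m := n) (by exact_mod_cast le_top) hs hx
  rw [iteratedDerivWithin_eq_iteratedFDerivWithin, iteratedDeriv_eq_iteratedFDeriv, ← h2]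
  rfl

lemma taylor_bound (f : ℝ → ℝ) (hf : ContDiff ℝ ((⊤:ℕ∞) : WithTop ℕ∞) f) (n : ℕ) (t₀ r : ℝ)
    (hr : 0 < r) :
    ∃ K : ℝ, 0 ≤ K ∧ ∀ u : ℝ, |u| ≤ r →
      |f (t₀ + u) - ∑ m ∈ Finset.range (n+1), iteratedDeriv m f t₀ / m.factorial * u ^ m|
        ≤ K * |u| ^ (n+1) := by
  -- bound on the (n+1)-st derivative on [t₀-r, t₀+r]
  obtain ⟨C, hC⟩ := (isCompact_Icc (a := t₀ - r) (b := t₀ + r)).exists_bound_of_continuousOn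
    ((hf.continuous_iteratedDeriv (n+1) (by exact_mod_cast le_top)).continuousOn)
  set C' : ℝ := max C 0 with hC'def
  have hC' : ∀ y ∈ Icc (t₀ - r) (t₀ + r), ‖iteratedDeriv (n+1) f y‖ ≤ C' :=
    fun y hy => le_trans (hC y hy) (le_max_left _ _)
  refine ⟨C' / n.factorial, by positivity, fun u hu => ?_⟩
  rcases le_or_gt 0 u with hu0 | hu0
  · -- right side
    have hab : t₀ ≤ t₀ + r := by linarith
    have hfo : ContDiffOn ℝ (n+1) f (Icc t₀ (t₀+r)) := hf.of_le (by exact_mod_cast le_top) |>.contDiffOn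
    have hx : t₀ + u ∈ Icc t₀ (t₀ + r) := by
      constructor <;> [linarith; (rw [abs_of_nonneg hu0] at hu; linarith)]
    have hbd : ∀ y ∈ Icc t₀ (t₀+r), ‖iteratedDerivWithin (n+1) f (Icc t₀ (t₀+r)) y‖ ≤ C' := by
      intro y hy
      rw [itdw hf (uniqueDiffOn_Icc (by linarith)) hy]
      exact hC' y ⟨by linarith [hy.1], by linarith [hy.2]⟩
    have := taylor_mean_remainder_bound hab hfo hx hbd
    have heq : taylorWithinEval f n (Icc t₀ (t₀+r)) t₀ (t₀ + u)
        = ∑ m ∈ Finset.range (n+1), iteratedDeriv m f t₀ / m.factorial * u ^ m := by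
      rw [taylor_within_apply]
      refine Finset.sum_congr rfl fun m _ => ?_
      rw [itdw hf (uniqueDiffOn_Icc (by linarith)) (by constructor <;> linarith)]
      simp [smul_eq_mul]
      ring
    rw [heq] at this
    calc _ ≤ C' * (t₀ + u - t₀) ^ (n+1) / n.factorial := this
      _ = C' / n.factorial * |u| ^ (n+1) := by
          rw [abs_of_nonneg hu0]; ring
  · -- left side: apply to f ∘ neg
    set g : ℝ → ℝ := fun x => f (-x) with hgdef
    have hg : ContDiff ℝ ((⊤:ℕ∞) : WithTop ℕ∞) g := hf.comp contDiff_neg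
    have hab : -t₀ ≤ -t₀ + r := by linarith
    have hfo : ContDiffOn ℝ (n+1) g (Icc (-t₀) (-t₀+r)) := hg.of_le (by exact_mod_cast le_top) |>.contDiffOn
    have hx : -t₀ + -u ∈ Icc (-t₀) (-t₀ + r) := by
      constructor <;> [linarith; (rw [abs_of_neg hu0] at hu; linarith)]
    have hgit : ∀ (m : ℕ) (y : ℝ), iteratedDeriv m g y = (-1:ℝ)^m * iteratedDeriv m f (-y) := by
      intro m y
      simpa [smul_eq_mul] using iteratedDeriv_comp_neg m f y
    have hbd : ∀ y ∈ Icc (-t₀) (-t₀+r), ‖iteratedDerivWithin (n+1) g (Icc (-t₀) (-t₀+r)) y‖ ≤ C' := by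
      intro y hy
      rw [itdw hg (uniqueDiffOn_Icc (by linarith)) hy, hgit]
      rw [norm_mul, norm_pow, norm_neg, norm_one, one_pow, one_mul]
      exact hC' (-y) ⟨by linarith [hy.2], by linarith [hy.1]⟩
    have := taylor_mean_remainder_bound hab hfo hx hbd
    have heq : taylorWithinEval g n (Icc (-t₀) (-t₀+r)) (-t₀) (-t₀ + -u)
        = ∑ m ∈ Finset.range (n+1), iteratedDeriv m f t₀ / m.factorial * u ^ m := by
      rw [taylor_within_apply]
      refine Finset.sum_congr rfl fun m _ => ?_
      rw [itdw hg (uniqueDiffOn_Icc (by linarith)) (by constructor <;> linarith), hgit]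
      rw [neg_neg]
      simp only [smul_eq_mul]
      rw [show -t₀ + -u - -t₀ = -u by ring]
      rcases Nat.even_or_odd m with hm | hm
      · rw [hm.neg_pow, hm.neg_one_pow]; ring
      · rw [hm.neg_pow, hm.neg_one_pow]; ring
    have hgval : g (-t₀ + -u) = f (t₀ + u) := by simp [hgdef]; ring_nf
    rw [heq, hgval] at this
    calc _ ≤ C' * (-t₀ + -u - -t₀) ^ (n+1) / n.factorial := this
      _ = C' / n.factorial * |u| ^ (n+1) := by
          rw [abs_of_neg hu0]; ring

open Polynomial in
lemma poly_of_vanish : ∀ (k : ℕ) (f : ℝ → ℝ), ContDiff ℝ ((⊤:ℕ∞) : WithTop ℕ∞) f →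
    ∀ a b : ℝ, a < b → (∀ x ∈ Ioo a b, iteratedDeriv k f x = 0) →
    ∃ p : Polynomial ℝ, ∀ x ∈ Ioo a b, f x = p.eval x := by
  intro k
  induction k with
  | zero =>
    intro f hf a b hab hvan
    exact ⟨0, fun x hx => by simpa using hvan x hx⟩
  | succ k IH =>
    intro f hf a b hab hvan
    have hdf : ContDiff ℝ ((⊤:ℕ∞) : WithTop ℕ∞) (deriv f) := (contDiff_infty_iff_deriv.mp hf).2
    have hvan' : ∀ x ∈ Ioo a b, iteratedDeriv k (deriv f) x = 0 := by
      intro x hx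
      have := hvan x hx
      rwa [iteratedDeriv_succ'] at this
    obtain ⟨p, hp⟩ := IH (deriv f) hdf a b hab hvan'
    -- antiderivative of p
    set P : Polynomial ℝ := p.sum fun n a => C (a / (n+1)) * X ^ (n+1) with hPdef
    have hP : derivative P = p := by
      rw [hPdef, Polynomial.sum, map_sum]
      conv_rhs => rw [← Polynomial.sum_C_mul_X_pow_eq p, Polynomial.sum]
      refine Finset.sum_congr rfl fun n _ => ?_
      rw [derivative_C_mul_X_pow, Nat.add_sub_cancel]
      congr 1
      push_cast
      field_simp
    set g : ℝ → ℝ := fun x => f x - P.eval x with hgdef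
    have hgdiff : Differentiable ℝ g :=
      (hf.differentiable (by simp)).sub (Polynomial.differentiable P)
    have hg0 : ∀ x ∈ Ioo a b, deriv g x = 0 := by
      intro x hx
      rw [hgdef, deriv_fun_sub ((hf.differentiable (by simp)) x)
        (Polynomial.differentiableAt P), Polynomial.deriv, hP, hp x hx, sub_self]
    set m : ℝ := (a+b)/2 with hmdef
    have hm : m ∈ Ioo a b := ⟨by rw [hmdef]; linarith, by rw [hmdef]; linarith⟩
    have hconst : ∀ x ∈ Ioo a b, g x = g m := by
      intro x hx
      have key : ∀ c d : ℝ, c ∈ Ioo a b → d ∈ Ioo a b → c ≤ d → g d = g c := by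
        intro c d hc hd hcd
        have := constant_of_derivWithin_zero (f := g) (a := c) (b := d)
          hgdiff.differentiableOn ?_ d (by constructor <;> linarith)
        · exact this
        · intro z hz
          have hz' : z ∈ Ioo a b := ⟨by linarith [hz.1, hc.1], by linarith [hz.2, hd.2]⟩
          rw [(hgdiff z).derivWithin
            ((uniqueDiffOn_Icc (by linarith [hz.1, hz.2] : c < d)) z ⟨hz.1, hz.2.le⟩)]
          exact hg0 z hz'
      rcases le_total x m with h | h
      · exact (key x m hx hm h).symm ▸ (key x m hx hm h)
      · exact key m x hm hx h
    refine ⟨P + C (g m), fun x hx => ?_⟩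
    have := hconst x hx
    rw [hgdef] at this
    simp only [eval_add, eval_C]
    have : f x - P.eval x = g m := this
    linarith [this]

lemma good_point (σ : ℝ → ℝ) (hσ : ContDiff ℝ ((⊤:ℕ∞) : WithTop ℕ∞) σ)
    (hσpoly : ∀ a b : ℝ, a < b →
      ¬∃ p : Polynomial ℝ, ∀ x ∈ Set.Ioo a b, σ x = p.eval x) (N : ℕ) :
    ∃ t₀ : ℝ, ∀ k ≤ N, iteratedDeriv k σ t₀ ≠ 0 := by
  by_contra hcon
  push_neg at hcon
  have hcl : ∀ k : Fin (N+1), IsClosed {t : ℝ | iteratedDeriv (k:ℕ) σ t = 0} := fun k =>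
    isClosed_eq (hσ.continuous_iteratedDeriv _ (by exact_mod_cast le_top)) continuous_const
  have hcover : ⋃ k : Fin (N+1), {t : ℝ | iteratedDeriv (k:ℕ) σ t = 0} = univ := by
    refine eq_univ_of_forall fun t => ?_
    obtain ⟨k, hkN, hk⟩ := hcon t
    exact mem_iUnion.mpr ⟨⟨k, Nat.lt_succ_of_le hkN⟩, hk⟩
  obtain ⟨k, t, ht⟩ := nonempty_interior_of_iUnion_of_closed hcl hcover
  have hnh : {t : ℝ | iteratedDeriv (k:ℕ) σ t = 0} ∈ nhds t :=
    mem_interior_iff_mem_nhds.mp ht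
  obtain ⟨ε, hε, hball⟩ := Metric.mem_nhds_iff.mp hnh
  have hioo : ∀ x ∈ Ioo (t - ε) (t + ε), iteratedDeriv (k:ℕ) σ x = 0 := by
    intro x hx
    exact hball (by rw [Real.ball_eq_Ioo]; exact hx)
  obtain ⟨p, hp⟩ := poly_of_vanish k σ hσ (t - ε) (t + ε) (by linarith) hioo
  exact hσpoly (t - ε) (t + ε) (by linarith) ⟨p, hp⟩

lemma sq_layer (σ : ℝ → ℝ) (hσ : ContDiff ℝ ((⊤:ℕ∞) : WithTop ℕ∞) σ) (t₀ : ℝ)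
    (h2 : iteratedDeriv 2 σ t₀ ≠ 0) (B δ : ℝ) (hB : 0 < B) (hδ : 0 < δ) :
    ∃ c w b : Fin 3 → ℝ, ∀ s : ℝ, |s| ≤ B →
      |(∑ i, c i * σ (w i * s + b i)) - s ^ 2| ≤ δ := by
  obtain ⟨K, hK0, hK⟩ := taylor_bound σ hσ 2 t₀ 1 one_pos
  set c₂ : ℝ := iteratedDeriv 2 σ t₀ with hc₂def
  have hc₂ : |c₂| > 0 := abs_pos.mpr h2
  set h : ℝ := min (1/B) (δ * |c₂| / (2 * K * B^3 + 1)) with hhdef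
  have hh0 : 0 < h := by
    apply lt_min
    · positivity
    · positivity
  have hh1 : h * B ≤ 1 := by
    have : h ≤ 1/B := min_le_left _ _
    calc h * B ≤ (1/B) * B := by nlinarith
      _ = 1 := by field_simp
  have hh2 : 2 * K * B^3 * h ≤ δ * |c₂| := by
    have h1 : h ≤ δ * |c₂| / (2 * K * B^3 + 1) := min_le_right _ _
    have h3 : (0:ℝ) < 2 * K * B^3 + 1 := by positivity
    have h4 := (le_div_iff₀ h3).mp h1
    nlinarith [hh0.le]
  refine ⟨![1/(h^2*c₂), 1/(h^2*c₂), -2/(h^2*c₂)], ![h, -h, 0], ![t₀, t₀, t₀], fun s hs => ?_⟩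
  set Tp : ℝ → ℝ := fun u => ∑ m ∈ Finset.range 3, iteratedDeriv m σ t₀ / m.factorial * u ^ m
    with hTpdef
  have hTsum : ∀ u : ℝ, Tp u + Tp (-u) = 2 * σ t₀ + c₂ * u^2 := by
    intro u
    simp only [hTpdef, Finset.sum_range_succ, Finset.sum_range_zero, iteratedDeriv_zero]
    norm_num [Nat.factorial]
    ring
  have hu : |h * s| ≤ 1 := by
    rw [abs_mul, abs_of_pos hh0]
    calc h * |s| ≤ h * B := by nlinarith [abs_nonneg s]
      _ ≤ 1 := hh1
  have hR1 := hK (h * s) hu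
  have hR2 := hK (-(h * s)) (by rwa [abs_neg])
  have hnet : (∑ i, (![1/(h^2*c₂), 1/(h^2*c₂), -2/(h^2*c₂)] : Fin 3 → ℝ) i *
      σ ((![h, -h, 0] : Fin 3 → ℝ) i * s + (![t₀, t₀, t₀] : Fin 3 → ℝ) i)) - s^2 =
      ((σ (t₀ + h*s) - Tp (h*s)) + (σ (t₀ + -(h*s)) - Tp (-(h*s)))) / (h^2 * c₂) := by
    rw [Fin.sum_univ_three]
    simp only [Matrix.cons_val_zero, Matrix.cons_val_one, Matrix.head_cons,
      Matrix.cons_val_two, Matrix.tail_cons]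
    have e1 : h * s + t₀ = t₀ + h * s := by ring
    have e2 : -h * s + t₀ = t₀ + -(h*s) := by ring
    have e3 : (0:ℝ) * s + t₀ = t₀ := by ring
    rw [e1, e2, e3]
    have hTs := hTsum (h * s)
    have hne : h^2 * c₂ ≠ 0 := by
      intro hcon
      rcases mul_eq_zero.mp hcon with hc | hc
      · exact absurd hc (by positivity)
      · exact h2 hc
    field_simp
    nlinarith [hTs]
  rw [hnet]
  rw [abs_div]
  have hden : |h^2 * c₂| = h^2 * |c₂| := by
    rw [abs_mul, abs_of_pos (by positivity : (0:ℝ) < h^2)]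
  rw [hden]
  have hnum : |(σ (t₀ + h*s) - Tp (h*s)) + (σ (t₀ + -(h*s)) - Tp (-(h*s)))|
      ≤ 2 * K * |h*s|^3 := by
    calc _ ≤ |σ (t₀ + h*s) - Tp (h*s)| + |σ (t₀ + -(h*s)) - Tp (-(h*s))| := abs_add_le _ _
      _ ≤ K * |h*s|^3 + K * |-(h*s)|^3 := add_le_add hR1 hR2
      _ = 2 * K * |h*s|^3 := by rw [abs_neg]; ring
  have hhs3 : |h*s|^3 ≤ h^3 * B^3 := by
    rw [abs_mul, abs_of_pos hh0]
    calc (h * |s|)^3 ≤ (h * B)^3 := by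
          apply pow_le_pow_left₀ (by positivity)
          nlinarith [abs_nonneg s]
      _ = h^3 * B^3 := by ring
  calc |(σ (t₀ + h*s) - Tp (h*s)) + (σ (t₀ + -(h*s)) - Tp (-(h*s)))| / (h^2 * |c₂|)
      ≤ (2 * K * (h^3 * B^3)) / (h^2 * |c₂|) := by
        apply div_le_div_of_nonneg_right ?_ (by positivity) |>.trans
        · exact le_refl _
        · exact hnum.trans (by nlinarith [hK0])
      _ = (2 * K * B^3 * h) / |c₂| := by field_simp
      _ ≤ δ := by
        rw [div_le_iff₀ hc₂]
        nlinarith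



def ee : Fin 3 → ℝ := ![-1, 0, 1]
def dd : Fin 3 → Fin 3 → ℝ := ![![0,1,0], ![-1/2,0,1/2], ![1,-2,1]]
def SS (x y : ℝ) (a b : Fin 3) (m : ℕ) : ℝ :=
  ∑ i, ∑ j, dd a i * dd b j * (ee i * x + ee j * y)^m
def EE (c : ℕ → ℝ) (a b : Fin 3) (h x y : ℝ) : ℝ :=
  ∑ m ∈ Finset.Ico (a.1+b.1+1) 5, c m / m.factorial * h^(m - a.1 - b.1 - 1) * SS x y a b m

lemma key (c : ℕ → ℝ) (a b : Fin 3) (h x y : ℝ) :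
    ∑ i, ∑ j, dd a i * dd b j *
      (∑ m ∈ Finset.range 5, c m / m.factorial * (h*(ee i * x + ee j * y))^m)
    = h^(a.1+b.1) * (c (a.1+b.1) * x^(a.1) * y^(b.1) + h * EE c a b h x y) := by
  fin_cases a <;> fin_cases b <;>
  · simp only [EE, SS, dd, ee, Fin.sum_univ_three, Finset.sum_range_succ,
      Finset.sum_range_zero, Finset.sum_Ico_eq_sum_range, Matrix.cons_val_zero,
      Matrix.cons_val_one, Matrix.head_cons, Matrix.cons_val_two, Matrix.tail_cons,
      Nat.factorial, Fin.zero_eta, Fin.mk_one, Fin.reduceFinMk, Matrix.cons_val]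
    norm_num
    try ring

lemma sum_swap4 (F : Fin 3 → Fin 3 → Fin 3 → Fin 3 → ℝ) :
    ∑ i, ∑ j, ∑ a, ∑ b, F i j a b = ∑ a, ∑ b, ∑ i, ∑ j, F i j a b := by
  calc ∑ i, ∑ j, ∑ a, ∑ b, F i j a b
      = ∑ i, ∑ a, ∑ j, ∑ b, F i j a b :=
        Finset.sum_congr rfl fun i _ => by rw [Finset.sum_comm]
    _ = ∑ a, ∑ i, ∑ j, ∑ b, F i j a b := by rw [Finset.sum_comm]
    _ = ∑ a, ∑ i, ∑ b, ∑ j, F i j a b :=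
        Finset.sum_congr rfl fun a _ => Finset.sum_congr rfl fun i _ => by rw [Finset.sum_comm]
    _ = ∑ a, ∑ b, ∑ i, ∑ j, F i j a b :=
        Finset.sum_congr rfl fun a _ => by rw [Finset.sum_comm]

def WW (q : Fin 3 → Fin 3 → ℝ) (h : ℝ) (i j : Fin 3) : ℝ :=
  ∑ a, ∑ b, q a b * dd a i * dd b j / h ^ (a.1 + b.1)

lemma step1 (c : ℕ → ℝ) (q : Fin 3 → Fin 3 → ℝ) (h x y : ℝ) (hh : h ≠ 0) :
    ∑ i, ∑ j, WW q h i j *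
      (∑ m ∈ Finset.range 5, c m / m.factorial * (h*(ee i * x + ee j * y))^m)
    = (∑ a : Fin 3, ∑ b : Fin 3, q a b * c (a.1+b.1) * x^(a.1) * y^(b.1))
      + h * ∑ a : Fin 3, ∑ b : Fin 3, q a b * EE c a b h x y := by
  have hpow : ∀ a b : Fin 3, h ^ (a.1+b.1) ≠ 0 := fun a b => pow_ne_zero _ hh
  calc ∑ i, ∑ j, WW q h i j *
        (∑ m ∈ Finset.range 5, c m / m.factorial * (h*(ee i * x + ee j * y))^m)
      = ∑ i, ∑ j, ∑ a, ∑ b, (q a b / h ^ (a.1+b.1)) *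
        (dd a i * dd b j *
          (∑ m ∈ Finset.range 5, c m / m.factorial * (h*(ee i * x + ee j * y))^m)) := by
        refine Finset.sum_congr rfl fun i _ => Finset.sum_congr rfl fun j _ => ?_
        rw [WW, Finset.sum_mul]
        refine Finset.sum_congr rfl fun a _ => ?_
        rw [Finset.sum_mul]
        refine Finset.sum_congr rfl fun b _ => ?_
        ring
    _ = ∑ a, ∑ b, ∑ i, ∑ j, (q a b / h ^ (a.1+b.1)) *
        (dd a i * dd b j *
          (∑ m ∈ Finset.range 5, c m / m.factorial * (h*(ee i * x + ee j * y))^m)) :=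
        sum_swap4 _
    _ = ∑ a : Fin 3, ∑ b : Fin 3, (q a b / h ^ (a.1+b.1)) *
          (h^(a.1+b.1) * (c (a.1+b.1) * x^(a.1) * y^(b.1) + h * EE c a b h x y)) := by
        refine Finset.sum_congr rfl fun a _ => Finset.sum_congr rfl fun b _ => ?_
        simp_rw [← Finset.mul_sum]
        rw [key]
    _ = ∑ a : Fin 3, ∑ b : Fin 3, (q a b * c (a.1+b.1) * x^(a.1) * y^(b.1)
          + h * (q a b * EE c a b h x y)) := by
        refine Finset.sum_congr rfl fun a _ => Finset.sum_congr rfl fun b _ => ?_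
        field_simp
    _ = _ := by
        simp_rw [Finset.sum_add_distrib, ← Finset.mul_sum]



def eq9 : Fin 3 × Fin 3 ≃ Fin 9 := finProdFinEquiv.trans (finCongr (by norm_num))

lemma layer0 (σ : ℝ → ℝ) (hσ : ContDiff ℝ ((⊤:ℕ∞) : WithTop ℕ∞) σ) (t₀ : ℝ)
    (hne : ∀ k ≤ 4, iteratedDeriv k σ t₀ ≠ 0) (p : Fin 3 → Fin 3 → ℝ) (δ : ℝ) (hδ : 0 < δ) :
    ∃ (A T : Fin 9 → ℝ) (v : Fin 9 → Fin 2 → ℝ), ∀ x ∈ Icc (-1:ℝ) 1, ∀ y ∈ Icc (-1:ℝ) 1,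
      |(∑ i, A i * σ (v i 0 * x + v i 1 * y + T i))
        - ∑ a : Fin 3, ∑ b : Fin 3, p a b * x^(a.1) * y^(b.1)| ≤ δ := by
  classical
  set c : ℕ → ℝ := fun m => iteratedDeriv m σ t₀ with hcdef
  set q : Fin 3 → Fin 3 → ℝ := fun a b => p a b / c (a.1+b.1) with hqdef
  obtain ⟨K, hK0, hK⟩ := taylor_bound σ hσ 4 t₀ 2 (by norm_num)
  -- continuity and bound for the error polynomial
  have hcont : Continuous fun z : ℝ × ℝ × ℝ =>
      ∑ a : Fin 3, ∑ b : Fin 3, q a b * EE c a b z.1 z.2.1 z.2.2 := by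
    refine continuous_finset_sum _ fun a _ => continuous_finset_sum _ fun b _ =>
      Continuous.mul continuous_const ?_
    unfold EE SS
    refine continuous_finset_sum _ fun m _ => ?_
    refine Continuous.mul (Continuous.mul continuous_const (continuous_fst.pow _)) ?_
    refine continuous_finset_sum _ fun i _ => continuous_finset_sum _ fun j _ => ?_
    exact Continuous.mul continuous_const
      (((continuous_const.mul (continuous_fst.comp continuous_snd)).add
        (continuous_const.mul (continuous_snd.comp continuous_snd))).pow _)
  obtain ⟨CE, hCE⟩ := (isCompact_Icc.prod (isCompact_Icc.prod isCompact_Icc) :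
      IsCompact (Icc (-1:ℝ) 1 ×ˢ (Icc (-1:ℝ) 1 ×ˢ Icc (-1:ℝ) 1))).exists_bound_of_continuousOn
    hcont.continuousOn
  set CE' : ℝ := max CE 0 with hCE'def
  have hCE'0 : 0 ≤ CE' := le_max_right _ _
  set CW : ℝ := ∑ a : Fin 3, ∑ b : Fin 3, |q a b| * 4 with hCWdef
  have hCW0 : 0 ≤ CW := Finset.sum_nonneg fun a _ => Finset.sum_nonneg fun b _ => by positivity
  set h : ℝ := min 1 (δ / (CE' + 288*CW*K + 1)) with hhdef
  have hh0 : 0 < h := lt_min one_pos (by positivity)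
  have hh1 : h ≤ 1 := min_le_left _ _
  have hhδ : h * (CE' + 288*CW*K) ≤ δ := by
    have h1 : h ≤ δ / (CE' + 288*CW*K + 1) := min_le_right _ _
    have h3 : (0:ℝ) < CE' + 288*CW*K + 1 := by positivity
    have h4 := (le_div_iff₀ h3).mp h1
    nlinarith [hh0.le]
  -- bounds on dd, ee
  have hdd : ∀ a i : Fin 3, |dd a i| ≤ 2 := by
    intro a i; rw [abs_le]; fin_cases a <;> fin_cases i <;> constructor <;> norm_num [dd]
  have hee : ∀ i : Fin 3, |ee i| ≤ 1 := by
    intro i; rw [abs_le]; fin_cases i <;> constructor <;> norm_num [ee]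
  refine ⟨fun k => WW q h (eq9.symm k).1 (eq9.symm k).2,
    fun _ => t₀,
    fun k => ![h * ee (eq9.symm k).1, h * ee (eq9.symm k).2],
    fun x hx y hy => ?_⟩
  have hxa : |x| ≤ 1 := abs_le.mpr ⟨hx.1, hx.2⟩
  have hya : |y| ≤ 1 := abs_le.mpr ⟨hy.1, hy.2⟩
  -- rewrite the network as a double sum
  have hnet : (∑ k : Fin 9,
        (fun k => WW q h (eq9.symm k).1 (eq9.symm k).2) k *
          σ ((fun k => ![h * ee (eq9.symm k).1,
              h * ee (eq9.symm k).2]) k 0 * x +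
            (fun k => ![h * ee (eq9.symm k).1,
              h * ee (eq9.symm k).2]) k 1 * y + (fun _ => t₀) k))
      = ∑ i : Fin 3, ∑ j : Fin 3, WW q h i j * σ (t₀ + h * (ee i * x + ee j * y)) := by
    rw [← Equiv.sum_comp eq9, Fintype.sum_prod_type]
    refine Finset.sum_congr rfl fun i _ => Finset.sum_congr rfl fun j _ => ?_
    simp only [Equiv.symm_apply_apply, Matrix.cons_val_zero, Matrix.cons_val_one,
      Matrix.head_cons]
    congr 1
    ring
  rw [hnet]
  -- Taylor polynomial
  set Tp : ℝ → ℝ := fun u => ∑ m ∈ Finset.range 5, c m / m.factorial * u^m with hTpdef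
  -- split into remainder and main part
  have hsplit : ∑ i : Fin 3, ∑ j : Fin 3, WW q h i j * σ (t₀ + h * (ee i * x + ee j * y))
      = (∑ i : Fin 3, ∑ j : Fin 3, WW q h i j *
          (σ (t₀ + h * (ee i * x + ee j * y)) - Tp (h * (ee i * x + ee j * y))))
        + ∑ i : Fin 3, ∑ j : Fin 3, WW q h i j * Tp (h * (ee i * x + ee j * y)) := by
    rw [← Finset.sum_add_distrib]
    refine Finset.sum_congr rfl fun i _ => ?_
    rw [← Finset.sum_add_distrib]
    refine Finset.sum_congr rfl fun j _ => ?_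
    ring
  have hmain : ∑ i : Fin 3, ∑ j : Fin 3, WW q h i j * Tp (h * (ee i * x + ee j * y))
      = (∑ a : Fin 3, ∑ b : Fin 3, p a b * x^(a.1) * y^(b.1))
        + h * ∑ a : Fin 3, ∑ b : Fin 3, q a b * EE c a b h x y := by
    rw [hTpdef]
    rw [step1 c q h x y (ne_of_gt hh0)]
    congr 1
    refine Finset.sum_congr rfl fun a _ => Finset.sum_congr rfl fun b _ => ?_
    rw [hqdef]
    have : c (a.1+b.1) ≠ 0 := hne _ (by omega)
    field_simp
  -- remainder bound
  have hrem : ∀ i j : Fin 3,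
      |WW q h i j * (σ (t₀ + h * (ee i * x + ee j * y)) - Tp (h * (ee i * x + ee j * y)))|
        ≤ (CW / h^4) * (K * (2*h)^5) := by
    intro i j
    have hu : |ee i * x + ee j * y| ≤ 2 := by
      have h1 : |ee i * x| ≤ 1 := by
        rw [abs_mul]; nlinarith [hee i, hxa, abs_nonneg (ee i), abs_nonneg x]
      have h2 : |ee j * y| ≤ 1 := by
        rw [abs_mul]; nlinarith [hee j, hya, abs_nonneg (ee j), abs_nonneg y]
      calc |ee i * x + ee j * y| ≤ |ee i * x| + |ee j * y| := abs_add_le _ _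
        _ ≤ 2 := by linarith
    have harg : |h * (ee i * x + ee j * y)| ≤ 2 := by
      rw [abs_mul, abs_of_pos hh0]
      nlinarith [abs_nonneg (ee i * x + ee j * y)]
    have hR := hK _ harg
    have hR' : |σ (t₀ + h * (ee i * x + ee j * y)) - Tp (h * (ee i * x + ee j * y))|
        ≤ K * (2*h)^5 := by
      refine hR.trans ?_
      have h5 : |h * (ee i * x + ee j * y)| ≤ 2 * h := by
        rw [abs_mul, abs_of_pos hh0]
        nlinarith [abs_nonneg (ee i * x + ee j * y)]
      have h6 : |h * (ee i * x + ee j * y)|^5 ≤ (2*h)^5 :=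
        pow_le_pow_left₀ (abs_nonneg _) h5 5
      exact le_trans (le_of_eq (by norm_num)) (mul_le_mul_of_nonneg_left h6 hK0)
    have hW : |WW q h i j| ≤ CW / h^4 := by
      rw [WW]
      calc |∑ a : Fin 3, ∑ b : Fin 3, q a b * dd a i * dd b j / h ^ (a.1 + b.1)|
          ≤ ∑ a : Fin 3, ∑ b : Fin 3, |q a b * dd a i * dd b j / h ^ (a.1 + b.1)| := by
            refine (Finset.abs_sum_le_sum_abs _ _).trans ?_
            exact Finset.sum_le_sum fun a _ => Finset.abs_sum_le_sum_abs _ _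
        _ ≤ ∑ a : Fin 3, ∑ b : Fin 3, |q a b| * 4 / h^4 := by
            refine Finset.sum_le_sum fun a _ => Finset.sum_le_sum fun b _ => ?_
            rw [abs_div, abs_mul, abs_mul, abs_pow, abs_of_pos hh0]
            have hpow : h^4 ≤ h^(a.1+b.1) :=
              pow_le_pow_of_le_one hh0.le hh1 (by omega)
            have hnum : |q a b| * |dd a i| * |dd b j| ≤ |q a b| * 4 := by
              calc |q a b| * |dd a i| * |dd b j| ≤ (|q a b| * 2) * 2 :=
                    mul_le_mul (mul_le_mul_of_nonneg_left (hdd a i) (abs_nonneg _))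
                      (hdd b j) (abs_nonneg _) (by positivity)
                _ = |q a b| * 4 := by ring
            exact div_le_div₀ (by positivity) hnum (by positivity) hpow
        _ = CW / h^4 := by rw [hCWdef, Finset.sum_div]
                           refine Finset.sum_congr rfl fun a _ => ?_
                           rw [Finset.sum_div]
    calc |WW q h i j * (σ (t₀ + h * (ee i * x + ee j * y)) - Tp (h * (ee i * x + ee j * y)))|
        = |WW q h i j| * |σ (t₀ + h * (ee i * x + ee j * y)) - Tp (h * (ee i * x + ee j * y))| :=
          abs_mul _ _
      _ ≤ (CW / h^4) * (K * (2*h)^5) := by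
          apply mul_le_mul hW hR' (abs_nonneg _) (by positivity)
  have hrem_tot : |∑ i : Fin 3, ∑ j : Fin 3, WW q h i j *
      (σ (t₀ + h * (ee i * x + ee j * y)) - Tp (h * (ee i * x + ee j * y)))|
      ≤ 288 * CW * K * h := by
    calc |∑ i : Fin 3, ∑ j : Fin 3, WW q h i j *
        (σ (t₀ + h * (ee i * x + ee j * y)) - Tp (h * (ee i * x + ee j * y)))|
        ≤ ∑ i : Fin 3, ∑ j : Fin 3, |WW q h i j *
          (σ (t₀ + h * (ee i * x + ee j * y)) - Tp (h * (ee i * x + ee j * y)))| := by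
          refine (Finset.abs_sum_le_sum_abs _ _).trans ?_
          exact Finset.sum_le_sum fun i _ => Finset.abs_sum_le_sum_abs _ _
      _ ≤ ∑ _i : Fin 3, ∑ _j : Fin 3, (CW / h^4) * (K * (2*h)^5) :=
          Finset.sum_le_sum fun i _ => Finset.sum_le_sum fun j _ => hrem i j
      _ = 9 * ((CW / h^4) * (K * (2*h)^5)) := by
          simp [Finset.sum_const, Finset.card_univ]
          ring
      _ = 288 * CW * K * h := by
          field_simp
          ring
  have hEb : |∑ a : Fin 3, ∑ b : Fin 3, q a b * EE c a b h x y| ≤ CE' := by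
    have hmem : ((h, x, y) : ℝ × ℝ × ℝ) ∈
        Icc (-1:ℝ) 1 ×ˢ (Icc (-1:ℝ) 1 ×ˢ Icc (-1:ℝ) 1) :=
      ⟨⟨by linarith, hh1⟩, ⟨hx, hy⟩⟩
    have := hCE (h, x, y) hmem
    rw [Real.norm_eq_abs] at this
    exact this.trans (le_max_left _ _)
  rw [hsplit, hmain]
  have hring : (∑ i : Fin 3, ∑ j : Fin 3, WW q h i j *
        (σ (t₀ + h * (ee i * x + ee j * y)) - Tp (h * (ee i * x + ee j * y))))
      + ((∑ a : Fin 3, ∑ b : Fin 3, p a b * x^(a.1) * y^(b.1))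
        + h * ∑ a : Fin 3, ∑ b : Fin 3, q a b * EE c a b h x y)
      - (∑ a : Fin 3, ∑ b : Fin 3, p a b * x^(a.1) * y^(b.1))
      = (∑ i : Fin 3, ∑ j : Fin 3, WW q h i j *
        (σ (t₀ + h * (ee i * x + ee j * y)) - Tp (h * (ee i * x + ee j * y))))
      + h * ∑ a : Fin 3, ∑ b : Fin 3, q a b * EE c a b h x y := by ring
  rw [hring]
  calc |(∑ i : Fin 3, ∑ j : Fin 3, WW q h i j *
        (σ (t₀ + h * (ee i * x + ee j * y)) - Tp (h * (ee i * x + ee j * y))))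
      + h * ∑ a : Fin 3, ∑ b : Fin 3, q a b * EE c a b h x y|
      ≤ |∑ i : Fin 3, ∑ j : Fin 3, WW q h i j *
        (σ (t₀ + h * (ee i * x + ee j * y)) - Tp (h * (ee i * x + ee j * y)))|
      + |h * ∑ a : Fin 3, ∑ b : Fin 3, q a b * EE c a b h x y| := abs_add_le _ _
    _ ≤ 288 * CW * K * h + h * CE' := by
        refine add_le_add hrem_tot ?_
        rw [abs_mul, abs_of_pos hh0]
        exact mul_le_mul_of_nonneg_left hEb hh0.le
    _ = h * (CE' + 288*CW*K) := by ring
    _ ≤ δ := hhδ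

lemma iter_bound (g : ℝ → ℝ) (p B₀ B e₀ : ℝ) (hB₀ : 1 ≤ B₀) (hp : |p| ≤ B₀)
    (hB : B = B₀^1024 + 2) (hg : ∀ u : ℝ, |u| ≤ B → |g u - u^2| ≤ e₀) (he₀ : 0 < e₀)
    (hsmall : (2*B+1)^10 * e₀ ≤ 1) :
    ∀ n, n ≤ 10 → ∀ s : ℝ, |s - p| ≤ e₀ → |g^[n] s - p^(2^n)| ≤ (2*B+1)^n * e₀ := by
  have hBpos : (1:ℝ) ≤ B := by
    rw [hB]; nlinarith [one_le_pow₀ hB₀ (n := 1024), pow_nonneg (le_trans zero_le_one hB₀) 1024]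
  have hbase : (1:ℝ) ≤ 2*B+1 := by linarith
  intro n
  induction n with
  | zero => intro _ s hs; simpa using hs
  | succ n ih =>
    intro hn s hs
    have hn' : n ≤ 10 := by omega
    have IH := ih hn' s hs
    set u : ℝ := g^[n] s with hu
    have hmono : (2*B+1)^n ≤ (2*B+1)^10 := pow_le_pow_right₀ hbase hn'
    have hub : |u - p^(2^n)| ≤ 1 := by
      refine IH.trans ?_
      calc (2*B+1)^n * e₀ ≤ (2*B+1)^10 * e₀ := by nlinarith
        _ ≤ 1 := hsmall
    have hpb : |p^(2^n)| ≤ B - 2 := by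
      rw [abs_pow, hB]
      have h1 : |p|^(2^n) ≤ B₀^(2^n) := pow_le_pow_left₀ (abs_nonneg p) hp _
      have h2 : B₀^(2^n) ≤ B₀^1024 := pow_le_pow_right₀ hB₀ (by
        calc 2^n ≤ 2^10 := Nat.pow_le_pow_right (by norm_num) hn'
          _ ≤ 1024 := by norm_num)
      linarith
    have huB : |u| ≤ B := by
      have := abs_sub_abs_le_abs_sub u (p^(2^n))
      have h3 : |u| ≤ |p^(2^n)| + |u - p^(2^n)| := by
        nlinarith [abs_sub_abs_le_abs_sub u (p^(2^n))]
      linarith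
    have hgu := hg u huB
    have hiter : g^[n+1] s = g u := by rw [hu, Function.iterate_succ_apply']
    have hpow : p^(2^(n+1)) = (p^(2^n))^2 := by
      rw [← pow_mul, pow_succ]
    rw [hiter, hpow]
    have hdiff : |u^2 - (p^(2^n))^2| ≤ (2*B+1)^n * e₀ * (2*B) := by
      have : u^2 - (p^(2^n))^2 = (u - p^(2^n)) * (u + p^(2^n)) := by ring
      rw [this, abs_mul]
      have hsum : |u + p^(2^n)| ≤ 2*B := by
        calc |u + p^(2^n)| ≤ |u| + |p^(2^n)| := abs_add_le _ _
          _ ≤ 2*B := by linarith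
      apply mul_le_mul IH hsum (abs_nonneg _) (by positivity)
    calc |g u - (p^(2^n))^2| = |(g u - u^2) + (u^2 - (p^(2^n))^2)| := by ring_nf
      _ ≤ |g u - u^2| + |u^2 - (p^(2^n))^2| := abs_add_le _ _
      _ ≤ e₀ + (2*B+1)^n * e₀ * (2*B) := by linarith
      _ ≤ (2*B+1)^(n+1) * e₀ := by
          have h4 : (1:ℝ) ≤ (2*B+1)^n := one_le_pow₀ hbase
          have : (2*B+1)^(n+1) = (2*B+1)^n * (2*B) + (2*B+1)^n := by ring
          nlinarith

lemma foldl_eq_iterate {α : Type*} (F : ℝ → α → ℝ) (g : ℝ → ℝ) (hF : ∀ s a, F s a = g s) :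
    ∀ (l : List α) (s : ℝ), List.foldl F s l = g^[l.length] s := by
  intro l
  induction l with
  | nil => intro s; simp
  | cons a l ih =>
    intro s
    rw [List.foldl_cons, hF, List.length_cons, ih, Function.iterate_succ_apply]



end AuxStmt11

/-- The polynomial `Q(x,y) = (A x²y² + B x²y + C xy² + D x² + 2E xy + F y² +
2G x + 2H y + I)^(2^10)`, nominally of coordinatewise degree `2^11`, is
approximated arbitrarily well on `[-1,1]²` by a hierarchical network with `11`
layers and `39` units: a shallow network `g₀` with `9` units in two variables
followed by ten univariate shallow networks `g₁, …, g₁₀` with `3` units each,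
composed as `g₁₀ ∘ ⋯ ∘ g₁ ∘ g₀`. -/
theorem stmt11 (σ : ℝ → ℝ) (hσ : ContDiff ℝ (⊤ : ℕ∞) σ)
    (hσpoly : ∀ a b : ℝ, a < b →
      ¬∃ p : Polynomial ℝ, ∀ x ∈ Set.Ioo a b, σ x = p.eval x)
    (cA cB cC cD cE cF cG cH cI : ℝ) (ε : ℝ) (hε : 0 < ε) :
    ∃ (a t : Fin 9 → ℝ) (v : Fin 9 → Fin 2 → ℝ)
      (c w b : Fin 10 → Fin 3 → ℝ),
      ∀ x ∈ Set.Icc (-1 : ℝ) 1, ∀ y ∈ Set.Icc (-1 : ℝ) 1,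
        |(cA * x ^ 2 * y ^ 2 + cB * x ^ 2 * y + cC * x * y ^ 2 + cD * x ^ 2 +
              2 * cE * x * y + cF * y ^ 2 + 2 * cG * x + 2 * cH * y + cI) ^ (2 ^ 10) -
            (List.finRange 10).foldl
              (fun s j => ∑ i, c j i * σ (w j i * s + b j i))
              (∑ i, a i * σ (v i 0 * x + v i 1 * y + t i))| ≤ ε := by
  have hsig : ContDiff ℝ ((⊤:ℕ∞) : WithTop ℕ∞) σ := hσ.of_le (le_refl _)
  obtain ⟨t₀, ht₀⟩ := good_point σ hsig hσpoly 4
  obtain ⟨pm, hpm⟩ : ∃ pm : Fin 3 → Fin 3 → ℝ,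
      pm = ![![cI, 2*cH, cF], ![2*cG, 2*cE, cC], ![cD, cB, cA]] := ⟨_, rfl⟩
  have hPeq : ∀ x y : ℝ, (∑ a : Fin 3, ∑ b : Fin 3, pm a b * x^(a.1) * y^(b.1))
      = cA * x ^ 2 * y ^ 2 + cB * x ^ 2 * y + cC * x * y ^ 2 + cD * x ^ 2 +
        2 * cE * x * y + cF * y ^ 2 + 2 * cG * x + 2 * cH * y + cI := by
    intro x y
    simp only [hpm, Fin.sum_univ_three, Matrix.cons_val_zero, Matrix.cons_val_one,
      Matrix.head_cons, Matrix.cons_val_two, Matrix.tail_cons]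
    norm_num
    ring
  obtain ⟨B₀, hB₀def⟩ : ∃ r : ℝ, r = (∑ a : Fin 3, ∑ b : Fin 3, |pm a b|) + 1 := ⟨_, rfl⟩
  have habs0 : 0 ≤ ∑ a : Fin 3, ∑ b : Fin 3, |pm a b| :=
    Finset.sum_nonneg fun a _ => Finset.sum_nonneg fun b _ => abs_nonneg _
  have hB₀1 : 1 ≤ B₀ := by rw [hB₀def]; linarith
  obtain ⟨B, hBdef⟩ : ∃ r : ℝ, r = B₀^1024 + 2 := ⟨_, rfl⟩
  have h1024 : (1:ℝ) ≤ B₀^1024 := one_le_pow₀ hB₀1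
  have hBpos : 0 < B := by rw [hBdef]; linarith
  obtain ⟨e₀, he₀def⟩ : ∃ r : ℝ, r = min 1 ε / (2 * (2*B+1)^10) := ⟨_, rfl⟩
  have hpow10 : (0:ℝ) < (2*B+1)^10 := by positivity
  have he₀ : 0 < e₀ := by
    rw [he₀def]
    have : (0:ℝ) < min 1 ε := lt_min one_pos hε
    positivity
  have hkey : (2*B+1)^10 * e₀ = min 1 ε / 2 := by
    rw [he₀def]
    field_simp
  have hsmall : (2*B+1)^10 * e₀ ≤ 1 := by
    rw [hkey]
    have : min 1 ε ≤ 1 := min_le_left _ _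
    linarith
  have hsmallε : (2*B+1)^10 * e₀ ≤ ε := by
    rw [hkey]
    have : min 1 ε ≤ ε := min_le_right _ _
    linarith
  obtain ⟨A, T, v, hlay⟩ := layer0 σ hsig t₀ ht₀ pm e₀ he₀
  obtain ⟨c, w, b, hsq⟩ := sq_layer σ hsig t₀ (ht₀ 2 (by norm_num)) B e₀ hBpos he₀
  refine ⟨A, T, v, fun _ => c, fun _ => w, fun _ => b, fun x hx y hy => ?_⟩
  set g : ℝ → ℝ := fun s => ∑ i, c i * σ (w i * s + b i) with hgdef
  rw [foldl_eq_iterate _ g (fun s j => rfl)]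
  rw [List.length_finRange]
  obtain ⟨P, hPdef⟩ : ∃ r : ℝ, r = ∑ a : Fin 3, ∑ b : Fin 3, pm a b * x^(a.1) * y^(b.1) :=
    ⟨_, rfl⟩
  rw [← hPeq x y, ← hPdef]
  have hxa : |x| ≤ 1 := abs_le.mpr ⟨hx.1, hx.2⟩
  have hya : |y| ≤ 1 := abs_le.mpr ⟨hy.1, hy.2⟩
  have hPb : |P| ≤ B₀ := by
    rw [hPdef]
    calc |∑ a : Fin 3, ∑ b : Fin 3, pm a b * x^(a.1) * y^(b.1)|
        ≤ ∑ a : Fin 3, ∑ b : Fin 3, |pm a b * x^(a.1) * y^(b.1)| := by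
          refine (Finset.abs_sum_le_sum_abs _ _).trans ?_
          exact Finset.sum_le_sum fun a _ => Finset.abs_sum_le_sum_abs _ _
      _ ≤ ∑ a : Fin 3, ∑ b : Fin 3, |pm a b| := by
          refine Finset.sum_le_sum fun a _ => Finset.sum_le_sum fun b _ => ?_
          rw [abs_mul, abs_mul, abs_pow, abs_pow]
          have h1 : |x|^(a.1) ≤ 1 := pow_le_one₀ (abs_nonneg x) hxa
          have h2 : |y|^(b.1) ≤ 1 := pow_le_one₀ (abs_nonneg y) hya
          calc |pm a b| * |x|^(a.1) * |y|^(b.1) ≤ (|pm a b| * 1) * 1 :=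
                mul_le_mul (mul_le_mul_of_nonneg_left h1 (abs_nonneg _)) h2
                  (pow_nonneg (abs_nonneg y) _) (by positivity)
            _ = |pm a b| := by ring
      _ ≤ B₀ := by rw [hB₀def]; linarith
  have hglayer : ∀ u : ℝ, |u| ≤ B → |g u - u^2| ≤ e₀ := fun u hu => hsq u hu
  have hF := hlay x hx y hy
  have habs : |(∑ i, A i * σ (v i 0 * x + v i 1 * y + T i)) - P| ≤ e₀ := by
    rw [hPdef]; exact hF
  have := iter_bound g P B₀ B e₀ hB₀1 hPb hBdef hglayer he₀ hsmall 10 (le_refl 10)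
    (∑ i, A i * σ (v i 0 * x + v i 1 * y + T i)) habs
  rw [abs_sub_comm]
  exact this.trans hsmallε
end
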